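/- In the five-point example with the parametrized stochastic attack family p^α_{Z|X} (α ∈ [0,1]) where Z=1 if X=0, Z=3 if X=4, and Z=1 with probability α or Z=3 with probability 1−α if X=2, the resulting conditional entropy H(Y|Z) is maximized at α = 1/2, with maximum value h₂(1/3). -/

import Mathlib

open scoped BigOperators

/-- Joint law of `(Y, Z)` under the parametrized stochastic attack `p^α_{Z|X}` in the
five-point example: `P_{X,Y}` uniform on `{(0,0),(2,2),(4,4)}`, `Z = 1` if `X = 0`,
`Z = 3` if `X = 4`, and if `X = 2` then `Z = 1` w.p. `α`, `Z = 3` w.p. `1−α`. -/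
noncomputable def jointAlpha (α : ℝ) : Fin 5 × Fin 5 → ℝ := fun a =>
  if a = (0, 1) then 1/3
  else if a = (2, 1) then α/3
  else if a = (2, 3) then (1 - α)/3
  else if a = (4, 3) then 1/3
  else 0

/-- Conditional entropy `H(Y|Z)` of a joint law on `Fin 5 × Fin 5`
(first coordinate `Y`, second `Z`). -/
noncomputable def condEntYZ (j : Fin 5 × Fin 5 → ℝ) : ℝ :=
  -∑ a, j a * Real.log (j a / ∑ y, j (y, a.2))

/-- Binary entropy function (natural log). -/
noncomputable def h2 (p : ℝ) : ℝ := -p * Real.log p - (1 - p) * Real.log (1 - p)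

/-!
Since `H(Y|Z) = H(Y,Z) - H(Z)`, the family gives
`H(Y|Z) = (g α + g (1 - α)) / 3` with `g x = (1 + x) log (1 + x) - x log x` (`cellEntropy`):
each value of `Z` collects one certain point of mass `1/3` and a share of the mass of `X = 2`.
The derivative `log (1 + 1/x)` of `g` decreases, so `g` is concave, and the symmetric function
`g α + g (1 - α)` peaks at `α = 1/2`, where it equals `3 h₂(1/3)`.
-/

open Real Set

theorem condEntYZ_eq_sum_negMulLog_sub {j : Fin 5 × Fin 5 → ℝ} (hj : ∀ a, 0 ≤ j a) :
    condEntYZ j = ∑ a, negMulLog (j a) - ∑ z, negMulLog (∑ y, j (y, z)) := by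
  have hterm : ∀ a, -(j a * log (j a / ∑ y, j (y, a.2)))
      = negMulLog (j a) + j a * log (∑ y, j (y, a.2)) := by
    intro a
    rcases (hj a).eq_or_lt with ha | ha
    · simp [← ha]
    have hm : 0 < ∑ y, j (y, a.2) :=
      ha.trans_le (Finset.single_le_sum (fun y _ => hj (y, a.2)) (Finset.mem_univ a.1))
    rw [log_div ha.ne' hm.ne', negMulLog]
    ring
  have hmarg : ∑ a, j a * log (∑ y, j (y, a.2)) = -∑ z, negMulLog (∑ y, j (y, z)) := by
    rw [Fintype.sum_prod_type_right]
    simp only [← Finset.sum_mul, negMulLog, neg_mul, Finset.sum_neg_distrib, neg_neg]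
  rw [condEntYZ, ← Finset.sum_neg_distrib, Fintype.sum_congr _ _ hterm, Finset.sum_add_distrib,
    hmarg, sub_eq_add_neg]

/-- `(1 + x) * h2 (x / (1 + x))`: the unnormalised entropy of `Y` on a value of `Z`
that collects the masses `1` and `x`. -/
noncomputable def cellEntropy (x : ℝ) : ℝ := negMulLog x - negMulLog (1 + x)

theorem hasDerivAt_cellEntropy {x : ℝ} (hx : 0 < x) :
    HasDerivAt cellEntropy (log (1 + x) - log x) x := by
  have h := (hasDerivAt_negMulLog (x := 1 + x) (by positivity)).comp x
    ((hasDerivAt_id x).const_add 1)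
  exact ((hasDerivAt_negMulLog hx.ne').sub h).congr_deriv (by ring)

theorem concaveOn_cellEntropy : ConcaveOn ℝ (Ici 0) cellEntropy := by
  refine AntitoneOn.concaveOn_of_deriv (convex_Ici 0)
    (by unfold cellEntropy; fun_prop) ?_ ?_ <;> rw [interior_Ici]
  · exact fun x hx => (hasDerivAt_cellEntropy hx).differentiableAt.differentiableWithinAt
  intro x (hx : 0 < x) y (hy : 0 < y) hxy
  rw [(hasDerivAt_cellEntropy hx).deriv, (hasDerivAt_cellEntropy hy).deriv]
  have h : log ((1 + y) * x) ≤ log ((1 + x) * y) :=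
    log_le_log (by positivity) (by nlinarith)
  rw [log_mul (by positivity) hx.ne', log_mul (by positivity) hy.ne'] at h
  linarith

theorem jointAlpha_nonneg {α : ℝ} (hα : α ∈ Icc 0 1) (a : Fin 5 × Fin 5) :
    0 ≤ jointAlpha α a := by
  obtain ⟨h0, h1⟩ := hα
  unfold jointAlpha
  split_ifs <;> linarith

theorem condEntYZ_jointAlpha {α : ℝ} (hα : α ∈ Icc 0 1) :
    condEntYZ (jointAlpha α) = (cellEntropy α + cellEntropy (1 - α)) / 3 := by
  rw [condEntYZ_eq_sum_negMulLog_sub (jointAlpha_nonneg hα)]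
  simp (config := { decide := true }) only [Fintype.sum_prod_type, Fin.sum_univ_five,
    jointAlpha, Prod.mk.injEq, if_true, if_false, and_true, and_false, true_and, false_and,
    negMulLog_zero, add_zero, zero_add]
  rw [show 1 / 3 + α / 3 = (1 + α) * 3⁻¹ by ring,
    show (1 - α) / 3 + 1 / 3 = (1 + (1 - α)) * 3⁻¹ by ring]
  simp only [div_eq_mul_inv, negMulLog_mul, negMulLog_one, cellEntropy]
  ring

theorem cellEntropy_half : cellEntropy (1 / 2) = 3 / 2 * h2 (1 / 3) := by
  norm_num [cellEntropy, h2, negMulLog, log_div, log_inv]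
  ring

/-- over the family `p^α`, `α ∈ [0,1]`, the conditional entropy `H(Y|Z)`
is maximized at `α = 1/2`, with maximum value `h₂(1/3)`. -/
theorem alpha_half_maximizes_condEnt :
    (∀ α ∈ Set.Icc (0 : ℝ) 1, condEntYZ (jointAlpha α) ≤ condEntYZ (jointAlpha (1/2))) ∧
    condEntYZ (jointAlpha (1/2)) = h2 (1/3) := by
  have hhalf : condEntYZ (jointAlpha (1 / 2)) = 2 / 3 * cellEntropy (1 / 2) := by
    rw [condEntYZ_jointAlpha (by norm_num)]
    norm_num
    ring
  refine ⟨fun α hα => ?_, by rw [hhalf, cellEntropy_half]; ring⟩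
  have hmid := concaveOn_cellEntropy.2 hα.1 (sub_nonneg.2 hα.2)
    (by norm_num : (0 : ℝ) ≤ 1 / 2) (by norm_num : (0 : ℝ) ≤ 1 / 2) (by norm_num)
  simp only [smul_eq_mul, show 1 / 2 * α + 1 / 2 * (1 - α) = 1 / 2 by ring] at hmid
  rw [condEntYZ_jointAlpha hα, hhalf]
  linarith
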